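/- arXiv:2301.13736 — 11 statements merged into one kernel-verified Lean document; each statement's English description precedes it below -/
import Mathlib

section
/- Let D be the diagonal real 𝒴 × 𝒴 matrix with diagonal entries D(y, y) = √(p(y)). Then the matrix Q̄ := D⁻¹ · Q · D is symmetric and positive semidefinite; in particular Q is similar to a symmetric positive semidefinite matrix. -/
/-!
Writing `G y y' = ∫ f y f y' dμ` for the Gram matrix of the functions `f y` in `L²(μ)`, one has
`Q = G * diag(p)⁻¹`, so `D⁻¹ Q D = D⁻¹ G D⁻¹` is a congruence transform of the positive
semidefinite matrix `G` by the symmetric matrix `D⁻¹`. The functions `f y` lie in `L²(μ)` because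
they take values in `[0, 1]`.
-/

open MeasureTheory Matrix

theorem posSemidef_integral_mul {ι A : Type*} [Fintype ι] [MeasurableSpace A] {μ : Measure A}
    {g : ι → A → ℝ} (hg : ∀ i, MemLp (g i) 2 μ) :
    (of fun i j => ∫ a, g i a * g j a ∂μ).PosSemidef := by
  have hgram : (of fun i j => ∫ a, g i a * g j a ∂μ) = gram ℝ fun i => (hg i).toLp (g i) := by
    ext i j
    rw [gram_apply, L2.inner_def, of_apply]
    refine integral_congr_ae ?_
    filter_upwards [(hg i).coeFn_toLp, (hg j).coeFn_toLp] with a hi hj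
    rw [Real.inner_apply, hi, hj]
  exact hgram ▸ posSemidef_gram ℝ _

theorem le_one_of_sum_eq_one {ι : Type*} [Fintype ι] {w : ι → ℝ} (hw : ∀ i, 0 ≤ w i)
    (h : ∑ i, w i = 1) (i : ι) : w i ≤ 1 :=
  h ▸ Finset.single_le_sum (fun j _ => hw j) (Finset.mem_univ i)

theorem memLp_of_nonneg_of_sum_eq_one {ι A : Type*} [Fintype ι] [MeasurableSpace A]
    {μ : Measure A} [IsFiniteMeasure μ] {f : ι → A → ℝ} (hmeas : ∀ i, Measurable (f i))
    (hnonneg : ∀ i a, 0 ≤ f i a) (hsum : ∀ a, ∑ i, f i a = 1) (q : ENNReal) (i : ι) :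
    MemLp (f i) q μ :=
  .of_bound (hmeas i).aestronglyMeasurable 1 <| .of_forall fun a => by
    rw [Real.norm_of_nonneg (hnonneg i a)]
    exact le_one_of_sum_eq_one (hnonneg · a) (hsum a) i

theorem diagonal_inv_eq {n K : Type*} [Fintype n] [DecidableEq n] [Field K] {s : n → K}
    (hs : ∀ i, s i ≠ 0) : (diagonal s)⁻¹ = diagonal s⁻¹ := by
  refine inv_eq_left_inv ?_
  rw [diagonal_mul_diagonal, ← diagonal_one]
  exact congrArg diagonal (funext fun i => inv_mul_cancel₀ (hs i))

theorem diagonal_inv_mul_mul_diagonal_inv_sq_mul_diagonal {n K : Type*} [Fintype n]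
    [DecidableEq n] [Field K] (G : Matrix n n K) {s : n → K} (hs : ∀ i, s i ≠ 0) :
    (diagonal s)⁻¹ * (G * diagonal fun i => (s i ^ 2)⁻¹) * diagonal s
      = diagonal s⁻¹ * G * diagonal s⁻¹ := by
  simp only [diagonal_inv_eq hs, Matrix.mul_assoc, diagonal_mul_diagonal]
  congr 3
  ext i
  rw [Pi.inv_apply]
  field_simp [hs i]

theorem stmt_1_general {Y : Type*} [Fintype Y] [DecidableEq Y]
    {A : Type*} [MeasurableSpace A] (μ : Measure A) [IsProbabilityMeasure μ]
    (f : Y → A → ℝ)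
    (hmeas : ∀ y, Measurable (f y))
    (hnonneg : ∀ y α, 0 ≤ f y α)
    (hsum : ∀ α, ∑ y, f y α = 1)
    (p : Y → ℝ)
    (hppos : ∀ y, 0 < p y)
    (Q : Matrix Y Y ℝ)
    (hQ : ∀ yt y, Q yt y = (∫ α, f yt α * f y α ∂μ) / p y)
    (D : Matrix Y Y ℝ)
    (hD : D = Matrix.diagonal fun y => Real.sqrt (p y)) :
    (D⁻¹ * Q * D).IsSymm ∧ (D⁻¹ * Q * D).PosSemidef := by
  set G : Matrix Y Y ℝ := of fun i j => ∫ α, f i α * f j α ∂μ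
  have hG : G.PosSemidef :=
    posSemidef_integral_mul (memLp_of_nonneg_of_sum_eq_one hmeas hnonneg hsum 2)
  have hsqrt : ∀ y, Real.sqrt (p y) ≠ 0 := fun y => (Real.sqrt_pos.2 (hppos y)).ne'
  have hQG : Q = G * diagonal fun y => (Real.sqrt (p y) ^ 2)⁻¹ := by
    ext i j
    simp only [hQ, mul_diagonal, Real.sq_sqrt (hppos j).le, G, of_apply, div_eq_mul_inv]
  have hconj : D⁻¹ * Q * D = diagonal (fun y => Real.sqrt (p y))⁻¹ * G
      * diagonal (fun y => Real.sqrt (p y))⁻¹ := by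
    rw [hD, hQG, diagonal_inv_mul_mul_diagonal_inv_sq_mul_diagonal G hsqrt]
  have hPSD : (D⁻¹ * Q * D).PosSemidef := by
    rw [hconj]
    simpa only [diagonal_conjTranspose, star_trivial] using
      hG.conjTranspose_mul_mul_same (diagonal (fun y => Real.sqrt (p y))⁻¹)
  exact ⟨isHermitian_iff_isSymm.1 hPSD.isHermitian, hPSD⟩

/-- With `D` the diagonal matrix with entries `√(p y)`, the matrix
`D⁻¹ * Q * D` is symmetric and positive semidefinite; in particular `Q` is
similar to a symmetric positive semidefinite matrix. -/
theorem stmt_1 {Y : Type*} [Fintype Y] [Nonempty Y] [DecidableEq Y]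
    {A : Type*} [MeasurableSpace A] (μ : Measure A) [IsProbabilityMeasure μ]
    (f : Y → A → ℝ)
    (hmeas : ∀ y, Measurable (f y))
    (hnonneg : ∀ y α, 0 ≤ f y α)
    (hsum : ∀ α, ∑ y, f y α = 1)
    (p : Y → ℝ) (hp : ∀ y, p y = ∫ α, f y α ∂μ)
    (hppos : ∀ y, 0 < p y)
    (Q : Matrix Y Y ℝ)
    (hQ : ∀ yt y, Q yt y = (∫ α, f yt α * f y α ∂μ) / p y)
    (D : Matrix Y Y ℝ)
    (hD : D = Matrix.diagonal fun y => Real.sqrt (p y)) :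
    (D⁻¹ * Q * D).IsSymm ∧ (D⁻¹ * Q * D).PosSemidef :=
  stmt_1_general μ f hmeas hnonneg hsum p hppos Q hQ D hD
end

section
/- (Lemma 1) The matrix Q is diagonalizable over the reals with all eigenvalues in [0, 1]: there exist an invertible real 𝒴 × 𝒴 matrix U and a function d : 𝒴 → ℝ with 0 ≤ d(k) ≤ 1 for every k ∈ 𝒴 such that Q = U · diag(d) · U⁻¹, where diag(d) denotes the diagonal matrix with diagonal entries d(k). -/
/-!
Write `F y z = ∫ f y · f z dμ` and `D = diag √p`, so that `Q = F D⁻²` is similar to the symmetric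
matrix `M = D⁻¹ F D⁻¹`. Pointwise in `α`, the matrices `f fᵀ` and `diag f - f fᵀ` are positive
semidefinite (the latter by Jensen's inequality, since `f (·, α)` is a probability vector);
integrating gives `0 ≤ F ≤ diag p`, hence `0 ≤ M ≤ 1`, and the spectral theorem for `M`
diagonalizes `Q` with eigenvalues in `[0, 1]`.
-/

open MeasureTheory

namespace Matrix

variable {n : Type*} [Fintype n]

theorem posSemidef_integral {A : Type*} [MeasurableSpace A] {μ : Measure A}
    {K : A → Matrix n n ℝ} (hint : ∀ i j, Integrable (fun α => K α i j) μ)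
    (hK : ∀ᵐ α ∂μ, (K α).PosSemidef) : (of fun i j => ∫ α, K α i j ∂μ).PosSemidef := by
  refine .of_dotProduct_mulVec_nonneg ?_ fun x => ?_
  · ext i j
    simp only [conjTranspose_apply, of_apply, star_trivial]
    exact integral_congr_ae (hK.mono fun α h => congrFun₂ h.1 i j)
  · have hquad : star x ⬝ᵥ (of fun i j => ∫ α, K α i j ∂μ) *ᵥ x
        = ∫ α, star x ⬝ᵥ K α *ᵥ x ∂μ := by
      have hint' : ∀ i j, Integrable (fun α => x i * (K α i j * x j)) μ := fun i j =>
        ((hint i j).mul_const _).const_mul _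
      simp only [dotProduct, mulVec, of_apply, star_trivial, Finset.mul_sum]
      rw [integral_finsetSum _ fun i _ => integrable_finsetSum _ fun j _ => hint' i j]
      refine Finset.sum_congr rfl fun i _ => ?_
      rw [integral_finsetSum _ fun j _ => hint' i j]
      simp only [integral_const_mul, integral_mul_const]
    rw [hquad]
    exact integral_nonneg_of_ae (hK.mono fun α h => h.dotProduct_mulVec_nonneg x)

variable [DecidableEq n]

theorem posSemidef_diagonal_sub_vecMulVec_self {w : n → ℝ} (hw₀ : ∀ i, 0 ≤ w i)
    (hw₁ : ∑ i, w i = 1) : (diagonal w - vecMulVec w w).PosSemidef := by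
  refine .of_dotProduct_mulVec_nonneg ?_ fun x => ?_
  · ext i j
    by_cases h : i = j
    · subst h; simp
    · simp [diagonal_apply_ne _ h, diagonal_apply_ne _ (Ne.symm h), vecMulVec_apply, mul_comm]
  · have jensen : (∑ i, w i * x i) ^ 2 ≤ ∑ i, w i * x i ^ 2 :=
      (Even.convexOn_pow even_two).map_sum_le (fun i _ => hw₀ i) hw₁ fun _ _ => Set.mem_univ _
    have hquad : star x ⬝ᵥ (diagonal w - vecMulVec w w) *ᵥ x
        = ∑ i, w i * x i ^ 2 - (∑ i, w i * x i) ^ 2 := by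
      simp only [star_trivial, sub_mulVec, vecMulVec_mulVec, op_smul_eq_smul, dotProduct_sub,
        dotProduct_smul, smul_eq_mul]
      simp only [dotProduct, mulVec_diagonal, sq, mul_left_comm (x _), mul_comm (x _) (w _)]
    linarith

theorem IsHermitian.eigenvalues_le_one {M : Matrix n n ℝ} (hM : M.IsHermitian)
    (h : (1 - M).PosSemidef) (i : n) : hM.eigenvalues i ≤ 1 := by
  have hmem : 1 - hM.eigenvalues i ∈ spectrum ℝ (1 - M) := by
    have hsub := spectrum.singleton_sub_eq M (1 : ℝ)
    rw [map_one] at hsub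
    exact hsub ▸ Set.sub_mem_sub rfl (hM.eigenvalues_mem_spectrum_real i)
  obtain ⟨j, hj⟩ := h.1.spectrum_real_eq_range_eigenvalues ▸ hmem
  linarith [h.eigenvalues_nonneg j]

theorem IsHermitian.exists_diagonalization_conj {M S T : Matrix n n ℝ} (hM : M.IsHermitian)
    (hTS : T * S = 1) :
    ∃ U : Matrix n n ℝ, IsUnit U.det ∧ S * M * T = U * diagonal hM.eigenvalues * U⁻¹ := by
  set V : Matrix n n ℝ := (hM.eigenvectorUnitary : Matrix n n ℝ)
  have hVU : (star V * T) * (S * V) = 1 := by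
    rw [Matrix.mul_assoc, ← Matrix.mul_assoc T, hTS, Matrix.one_mul]
    exact Unitary.coe_star_mul_self _
  refine ⟨S * V, isUnit_det_of_left_inverse hVU, ?_⟩
  rw [inv_eq_left_inv hVU]
  conv_lhs => rw [hM.spectral_theorem]
  simp [V, Matrix.mul_assoc]

theorem exists_diagonalization_mul_diagonal_inv {F : Matrix n n ℝ} {p : n → ℝ}
    (hp : ∀ i, 0 < p i) (hF : F.PosSemidef) (hpF : (diagonal p - F).PosSemidef) :
    ∃ (U : Matrix n n ℝ) (d : n → ℝ), IsUnit U.det ∧ (∀ k, 0 ≤ d k ∧ d k ≤ 1) ∧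
      F * diagonal p⁻¹ = U * diagonal d * U⁻¹ := by
  set D : Matrix n n ℝ := diagonal fun i => √(p i)
  set Dinv : Matrix n n ℝ := diagonal fun i => (√(p i))⁻¹
  have hsqrt : ∀ i, √(p i) ≠ 0 := fun i => (Real.sqrt_pos.2 (hp i)).ne'
  have hDinvD : Dinv * D = 1 := by simp [D, Dinv, hsqrt]
  have hDinv_p : Dinv * diagonal p * Dinv = 1 := by
    simp only [Dinv, diagonal_mul_diagonal, ← diagonal_one]
    congr 1; funext i
    field_simp
    rw [Real.sq_sqrt (hp i).le, div_self (hp i).ne']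
  have hDinv_star : Dinvᴴ = Dinv := by simp [Dinv]
  have hM₀ : (Dinv * F * Dinv).PosSemidef := by
    simpa only [hDinv_star] using hF.mul_mul_conjTranspose_same Dinv
  have hM₁ : (1 - Dinv * F * Dinv).PosSemidef := by
    have := hpF.mul_mul_conjTranspose_same Dinv
    rwa [hDinv_star, Matrix.mul_sub, Matrix.sub_mul, hDinv_p] at this
  have hconj : F * diagonal p⁻¹ = D * (Dinv * F * Dinv) * Dinv := by
    ext i j
    simp only [D, Dinv, diagonal_mul, mul_diagonal, Pi.inv_apply]
    field_simp [hsqrt i]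
    rw [Real.sq_sqrt (hp j).le]
  obtain ⟨U, hU, hdiag⟩ := hM₀.1.exists_diagonalization_conj hDinvD
  exact ⟨U, _, hU, fun k => ⟨hM₀.eigenvalues_nonneg k, hM₀.1.eigenvalues_le_one hM₁ k⟩,
    hconj.trans hdiag⟩

end Matrix

open Matrix

section PredictiveMatrix

variable {Y A : Type*} [Fintype Y] [MeasurableSpace A] {μ : Measure A} {f : Y → A → ℝ}

theorem posSemidef_integral_mul_s2 (hint : ∀ y z, Integrable (fun α => f y α * f z α) μ) :
    (of fun y z => ∫ α, f y α * f z α ∂μ).PosSemidef :=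
  posSemidef_integral (K := fun α => vecMulVec (f · α) (f · α)) hint
    (ae_of_all _ fun _ => posSemidef_vecMulVec_self_star _)

theorem posSemidef_diagonal_integral_sub_integral_mul [DecidableEq Y]
    (hnonneg : ∀ y α, 0 ≤ f y α) (hsum : ∀ α, ∑ y, f y α = 1)
    (hint : ∀ y, Integrable (f y) μ) (hint₂ : ∀ y z, Integrable (fun α => f y α * f z α) μ) :
    (diagonal (fun y => ∫ α, f y α ∂μ) - of fun y z => ∫ α, f y α * f z α ∂μ).PosSemidef := by
  have hdiag : ∀ y z, Integrable (fun α => diagonal (f · α) y z) μ := fun y z => by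
    by_cases h : y = z
    · simpa [h] using hint z
    · simp [h]
  convert posSemidef_integral
    (K := fun α => diagonal (f · α) - vecMulVec (f · α) (f · α))
    (fun y z => (hdiag y z).sub (hint₂ y z))
    (ae_of_all _ fun α => posSemidef_diagonal_sub_vecMulVec_self (hnonneg · α) (hsum α)) using 1
  ext y z
  simp only [of_apply, Matrix.sub_apply, vecMulVec_apply]
  rw [integral_sub (hdiag y z) (hint₂ y z)]
  by_cases h : y = z <;> simp [h]

end PredictiveMatrix

theorem stmt_2_general {Y : Type*} [Fintype Y] [DecidableEq Y]
    {A : Type*} [MeasurableSpace A] (μ : Measure A) [IsProbabilityMeasure μ]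
    (f : Y → A → ℝ)
    (hmeas : ∀ y, Measurable (f y))
    (hnonneg : ∀ y α, 0 ≤ f y α)
    (hsum : ∀ α, ∑ y, f y α = 1)
    (p : Y → ℝ) (hp : ∀ y, p y = ∫ α, f y α ∂μ)
    (hppos : ∀ y, 0 < p y)
    (Q : Matrix Y Y ℝ)
    (hQ : ∀ yt y, Q yt y = (∫ α, f yt α * f y α ∂μ) / p y) :
    ∃ (U : Matrix Y Y ℝ) (d : Y → ℝ),
      IsUnit U.det ∧ (∀ k, 0 ≤ d k ∧ d k ≤ 1) ∧
      Q = U * Matrix.diagonal d * U⁻¹ := by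
  have hf_mem : ∀ y α, f y α ∈ Set.Icc (0 : ℝ) 1 := fun y α =>
    ⟨hnonneg y α, hsum α ▸ Finset.single_le_sum (fun z _ => hnonneg z α) (Finset.mem_univ y)⟩
  have hint : ∀ y, Integrable (f y) μ := fun y =>
    .of_mem_Icc 0 1 (hmeas y).aemeasurable (ae_of_all _ (hf_mem y))
  have hint₂ : ∀ y z, Integrable (fun α => f y α * f z α) μ := fun y z =>
    .of_mem_Icc 0 1 ((hmeas y).mul (hmeas z)).aemeasurable
      (ae_of_all _ fun α => ⟨mul_nonneg (hf_mem y α).1 (hf_mem z α).1,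
        mul_le_one₀ (hf_mem y α).2 (hf_mem z α).1 (hf_mem z α).2⟩)
  have hpF := posSemidef_diagonal_integral_sub_integral_mul hnonneg hsum hint hint₂
  rw [← funext hp] at hpF
  have hQ_eq : Q = (of fun y z => ∫ α, f y α * f z α ∂μ) * diagonal p⁻¹ := by
    ext y z
    simp [hQ, mul_diagonal, div_eq_mul_inv]
  exact hQ_eq ▸ exists_diagonalization_mul_diagonal_inv hppos (posSemidef_integral_mul_s2 hint₂) hpF

/-- (Lemma 1) The matrix `Q` is diagonalizable over the reals with all
eigenvalues in `[0, 1]`. -/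
theorem stmt_2 {Y : Type*} [Fintype Y] [Nonempty Y] [DecidableEq Y]
    {A : Type*} [MeasurableSpace A] (μ : Measure A) [IsProbabilityMeasure μ]
    (f : Y → A → ℝ)
    (hmeas : ∀ y, Measurable (f y))
    (hnonneg : ∀ y α, 0 ≤ f y α)
    (hsum : ∀ α, ∑ y, f y α = 1)
    (p : Y → ℝ) (hp : ∀ y, p y = ∫ α, f y α ∂μ)
    (hppos : ∀ y, 0 < p y)
    (Q : Matrix Y Y ℝ)
    (hQ : ∀ yt y, Q yt y = (∫ α, f yt α * f y α ∂μ) / p y) :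
    ∃ (U : Matrix Y Y ℝ) (d : Y → ℝ),
      IsUnit U.det ∧ (∀ k, 0 ≤ d k ∧ d k ≤ 1) ∧
      Q = U * Matrix.diagonal d * U⁻¹ :=
  stmt_2_general μ f hmeas hnonneg hsum p hp hppos Q hQ
end

section
/- Every eigenvalue of Q over the complex numbers is a real number lying in the interval [0, 1]: every root in ℂ of the characteristic polynomial of Q (viewed as a complex matrix via the inclusion ℝ ⊆ ℂ) is real and belongs to [0, 1]. -/
open MeasureTheory

lemma aux_bil {Y : Type*} [Fintype Y] {A : Type*} [MeasurableSpace A]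
    (μ : Measure A) [IsProbabilityMeasure μ] (f : Y → A → ℝ)
    (hmeas : ∀ y, Measurable (f y)) (hnonneg : ∀ y α, 0 ≤ f y α)
    (hsum : ∀ α, ∑ y, f y α = 1) (c : Y → ℝ) :
    0 ≤ ∑ i, ∑ y, (∫ α, f i α * f y α ∂μ) * (c i * c y) ∧
    ∑ i, ∑ y, (∫ α, f i α * f y α ∂μ) * (c i * c y) ≤ ∑ y, c y ^ 2 * ∫ α, f y α ∂μ := by
  classical
  have hfle : ∀ y α, f y α ≤ 1 := by
    intro y α
    calc f y α ≤ ∑ y', f y' α :=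
          Finset.single_le_sum (fun y' _ => hnonneg y' α) (Finset.mem_univ y)
    _ = 1 := hsum α
  have hint : ∀ i j : Y, Integrable (fun α => f i α * f j α) μ := by
    intro i j
    refine Integrable.mono' (integrable_const 1) ((hmeas i).mul (hmeas j)).aestronglyMeasurable
      (Filter.Eventually.of_forall fun α => ?_)
    rw [Real.norm_eq_abs, abs_of_nonneg (mul_nonneg (hnonneg i α) (hnonneg j α))]
    calc f i α * f j α ≤ 1 * 1 := by
          exact mul_le_mul (hfle i α) (hfle j α) (hnonneg j α) zero_le_one
    _ = 1 := by ring
  -- the double sum is an integral of a square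
  have key : ∑ i, ∑ y, (∫ α, f i α * f y α ∂μ) * (c i * c y)
      = ∫ α, (∑ y, c y * f y α) ^ 2 ∂μ := by
    have h1 : ∀ i : Y, ∑ y, (∫ α, f i α * f y α ∂μ) * (c i * c y)
        = ∫ α, ∑ y, f i α * f y α * (c i * c y) ∂μ := by
      intro i
      rw [integral_finset_sum _ (fun y _ => (hint i y).mul_const _)]
      exact Finset.sum_congr rfl fun y _ => (integral_mul_const _ _).symm
    simp_rw [h1]
    rw [← integral_finset_sum _ (fun i (_ : i ∈ Finset.univ) =>
      integrable_finset_sum (μ := μ)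
        (f := fun y α => f i α * f y α * (c i * c y)) _
        (fun y _ => (hint i y).mul_const _))]
    refine integral_congr_ae (Filter.Eventually.of_forall fun α => ?_)
    show ∑ i : Y, ∑ y : Y, f i α * f y α * (c i * c y) = (∑ y, c y * f y α) ^ 2
    rw [sq, Finset.sum_mul_sum]
    exact Finset.sum_congr rfl fun i _ => Finset.sum_congr rfl fun y _ => by ring
  have hptw : ∀ α, (∑ y, c y * f y α) ^ 2 ≤ ∑ y, c y ^ 2 * f y α := by
    intro α
    have := Finset.sum_sq_le_sum_mul_sum_of_sq_eq_mul (Finset.univ : Finset Y)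
      (r := fun y => c y * f y α) (f := fun y => c y ^ 2 * f y α) (g := fun y => f y α)
      (fun y _ => mul_nonneg (sq_nonneg _) (hnonneg y α))
      (fun y _ => hnonneg y α) (fun y _ => by ring)
    rwa [hsum α, mul_one] at this
  constructor
  · rw [key]
    exact integral_nonneg fun α => sq_nonneg _
  · rw [key]
    have hi1 : Integrable (fun α => (∑ y, c y * f y α) ^ 2) μ := by
      have : (fun α => (∑ y, c y * f y α) ^ 2)
          = fun α => ∑ i, ∑ y, (f i α * f y α) * (c i * c y) := by
        funext α
        rw [sq, Finset.sum_mul_sum]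
        exact Finset.sum_congr rfl fun i _ => Finset.sum_congr rfl fun y _ => by ring
      rw [this]
      exact integrable_finset_sum _ fun i _ =>
        integrable_finset_sum _ fun y _ => (hint i y).mul_const _
    have hi2 : Integrable (fun α => ∑ y, c y ^ 2 * f y α) μ :=
      integrable_finset_sum _ fun y _ => by
        refine Integrable.const_mul ?_ _
        refine Integrable.mono' (integrable_const 1) (hmeas y).aestronglyMeasurable
          (Filter.Eventually.of_forall fun α => ?_)
        rw [Real.norm_eq_abs, abs_of_nonneg (hnonneg y α)]
        exact hfle y α
    calc ∫ α, (∑ y, c y * f y α) ^ 2 ∂μ ≤ ∫ α, ∑ y, c y ^ 2 * f y α ∂μ :=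
          integral_mono hi1 hi2 hptw
    _ = ∑ y, c y ^ 2 * ∫ α, f y α ∂μ := by
        rw [integral_finset_sum _ (fun y _ => by
          refine Integrable.const_mul ?_ _
          refine Integrable.mono' (integrable_const 1) (hmeas y).aestronglyMeasurable
            (Filter.Eventually.of_forall fun α => ?_)
          rw [Real.norm_eq_abs, abs_of_nonneg (hnonneg y α)]
          exact hfle y α)]
        exact Finset.sum_congr rfl fun y _ => integral_const_mul _ _

/-- Every eigenvalue of `Q` over the complex numbers (i.e. every complex root
of the characteristic polynomial of `Q` viewed as a complex matrix) is a real
number lying in `[0, 1]`. -/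
theorem stmt_3 {Y : Type*} [Fintype Y] [Nonempty Y] [DecidableEq Y]
    {A : Type*} [MeasurableSpace A] (μ : Measure A) [IsProbabilityMeasure μ]
    (f : Y → A → ℝ)
    (hmeas : ∀ y, Measurable (f y))
    (hnonneg : ∀ y α, 0 ≤ f y α)
    (hsum : ∀ α, ∑ y, f y α = 1)
    (p : Y → ℝ) (hp : ∀ y, p y = ∫ α, f y α ∂μ)
    (hppos : ∀ y, 0 < p y)
    (Q : Matrix Y Y ℝ)
    (hQ : ∀ yt y, Q yt y = (∫ α, f yt α * f y α ∂μ) / p y) :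
    ∀ z : ℂ, (Matrix.charpoly (Q.map (fun x : ℝ => (x : ℂ)))).IsRoot z →
      ∃ r : ℝ, z = (r : ℂ) ∧ 0 ≤ r ∧ r ≤ 1 := by
  classical
  intro z hz
  set Qc : Matrix Y Y ℂ := Q.map (fun x : ℝ => (x : ℂ)) with hQcdef
  -- root gives singular matrix
  have hdet : (z • (1 : Matrix Y Y ℂ) - Qc).det = 0 := by
    have h1 : Polynomial.eval z Qc.charpoly
        = ((Matrix.charmatrix Qc).map (Polynomial.evalRingHom z)).det := by
      rw [Matrix.charpoly, ← Polynomial.coe_evalRingHom, RingHom.map_det]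
      rfl
    have h2 : (Matrix.charmatrix Qc).map (Polynomial.evalRingHom z) = z • 1 - Qc := by
      ext i j
      by_cases h : i = j <;>
        simp [Matrix.charmatrix_apply, h, Matrix.one_apply, Matrix.diagonal_apply]
    rw [Polynomial.IsRoot, h1, h2] at hz
    exact hz
  obtain ⟨v, hv0, hv⟩ := Matrix.exists_mulVec_eq_zero_iff.mpr hdet
  -- eigen equation
  have heig : ∀ i, ∑ y, (Q i y : ℂ) * v y = z * v i := by
    intro i
    have h := congrFun hv i
    rw [Matrix.sub_mulVec, Matrix.smul_mulVec, Matrix.one_mulVec] at h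
    have h' : z * v i - ∑ y, (Q i y : ℂ) * v y = 0 := by
      simpa [Matrix.mulVec, dotProduct, hQcdef, Matrix.map_apply] using h
    exact (sub_eq_zero.mp h').symm
  set S : Y → Y → ℝ := fun i j => ∫ α, f i α * f j α ∂μ with hSdef
  have hS : ∀ i j, S i j = ∫ α, f i α * f j α ∂μ := fun i j => rfl
  have hSsymm : ∀ i j, S i j = S j i := by
    intro i j
    rw [hS, hS]
    exact integral_congr_ae (Filter.Eventually.of_forall fun α => mul_comm _ _)
  have hpC : ∀ y, (p y : ℂ) ≠ 0 := fun y => by exact_mod_cast (hppos y).ne'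
  set w : Y → ℂ := fun y => v y / (p y : ℂ) with hwdef
  have hvw : ∀ y, v y = (p y : ℂ) * w y := fun y => by
    rw [hwdef, mul_comm, div_mul_cancel₀ _ (hpC y)]
  have heig2 : ∀ i, ∑ y, (S i y : ℂ) * w y = z * ((p i : ℂ) * w i) := by
    intro i
    have h := heig i
    rw [hvw i] at h
    rw [← h]
    refine Finset.sum_congr rfl fun y _ => ?_
    rw [hQ i y, hvw y, ← hS]
    push_cast
    rw [div_mul_eq_mul_div, mul_div_assoc, mul_div_cancel_left₀ _ (hpC y)]
  set a : Y → ℝ := fun y => (w y).re with hadef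
  set b : Y → ℝ := fun y => (w y).im with hbdef
  set L : ℂ := ∑ i, ∑ y, (S i y : ℂ) * ((starRingEnd ℂ) (w i) * w y) with hLdef
  have hL : L = z * ∑ i, (p i : ℂ) * ((starRingEnd ℂ) (w i) * w i) := by
    rw [hLdef, Finset.mul_sum]
    refine Finset.sum_congr rfl fun i _ => ?_
    calc ∑ y, (S i y : ℂ) * ((starRingEnd ℂ) (w i) * w y)
        = (starRingEnd ℂ) (w i) * ∑ y, (S i y : ℂ) * w y := by
          rw [Finset.mul_sum]; exact Finset.sum_congr rfl fun y _ => by ring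
      _ = (starRingEnd ℂ) (w i) * (z * ((p i : ℂ) * w i)) := by rw [heig2 i]
      _ = z * ((p i : ℂ) * ((starRingEnd ℂ) (w i) * w i)) := by ring
  have hLconj : (starRingEnd ℂ) L = L := by
    rw [hLdef, map_sum]
    simp only [map_sum, map_mul, Complex.conj_ofReal, Complex.conj_conj]
    rw [Finset.sum_comm]
    refine Finset.sum_congr rfl fun y _ => Finset.sum_congr rfl fun i _ => ?_
    rw [hSsymm i y]
    ring
  set Ar : ℝ := ∑ i, ∑ y, S i y * (a i * a y + b i * b y) with hArdef
  have hLre : L = (Ar : ℂ) := by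
    have him : L.im = 0 := by
      have h := congrArg Complex.im hLconj
      rw [Complex.conj_im] at h
      linarith
    have hre : L.re = Ar := by
      rw [hLdef, hArdef, Complex.re_sum]
      refine Finset.sum_congr rfl fun i _ => ?_
      rw [Complex.re_sum]
      refine Finset.sum_congr rfl fun y _ => ?_
      simp only [Complex.mul_re, Complex.mul_im, Complex.ofReal_re, Complex.ofReal_im,
        Complex.conj_re, Complex.conj_im, hadef, hbdef]
      ring
    rw [← hre]
    exact Complex.ext (by simp) (by simp [him])
  set T : ℝ := ∑ i, p i * Complex.normSq (w i) with hTdef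
  have hTsum : ∑ i, (p i : ℂ) * ((starRingEnd ℂ) (w i) * w i) = (T : ℂ) := by
    rw [hTdef]
    push_cast
    refine Finset.sum_congr rfl fun i _ => ?_
    rw [mul_comm ((starRingEnd ℂ) (w i)) (w i), Complex.mul_conj]
  have hTpos : 0 < T := by
    have hex : ∃ i, v i ≠ 0 := by
      by_contra h
      push_neg at h
      exact hv0 (funext h)
    obtain ⟨i, hi⟩ := hex
    have hwi : w i ≠ 0 := by
      intro h
      apply hi
      rw [hvw i, h, mul_zero]
    refine Finset.sum_pos' (fun y _ => mul_nonneg (hppos y).le (Complex.normSq_nonneg _)) ?_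
    exact ⟨i, Finset.mem_univ i, mul_pos (hppos i) (Complex.normSq_pos.mpr hwi)⟩
  have hsplit : Ar = (∑ i, ∑ y, S i y * (a i * a y)) + ∑ i, ∑ y, S i y * (b i * b y) := by
    rw [hArdef, ← Finset.sum_add_distrib]
    refine Finset.sum_congr rfl fun i _ => ?_
    rw [← Finset.sum_add_distrib]
    exact Finset.sum_congr rfl fun y _ => by ring
  obtain ⟨ha0, hale⟩ := aux_bil μ f hmeas hnonneg hsum a
  obtain ⟨hb0, hble⟩ := aux_bil μ f hmeas hnonneg hsum b
  simp only [← hS] at ha0 hale hb0 hble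
  simp only [← hp] at hale hble
  have hA0 : 0 ≤ Ar := by rw [hsplit]; exact add_nonneg ha0 hb0
  have hAT : Ar ≤ T := by
    rw [hsplit, hTdef]
    calc (∑ i, ∑ y, S i y * (a i * a y)) + ∑ i, ∑ y, S i y * (b i * b y)
        ≤ (∑ y, a y ^ 2 * p y) + ∑ y, b y ^ 2 * p y := add_le_add hale hble
      _ = ∑ i, p i * Complex.normSq (w i) := by
          rw [← Finset.sum_add_distrib]
          refine Finset.sum_congr rfl fun i _ => ?_
          rw [Complex.normSq_apply]
          simp only [hadef, hbdef]
          ring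
  have hfin : (Ar : ℂ) = z * (T : ℂ) := by rw [← hLre, ← hTsum, hL]
  refine ⟨Ar / T, ?_, div_nonneg hA0 hTpos.le, (div_le_one hTpos).mpr hAT⟩
  have hTne : (T : ℂ) ≠ 0 := by exact_mod_cast hTpos.ne'
  push_cast
  rw [eq_div_iff hTne]
  exact hfin.symm
end

section
/- For every function s : 𝒴 → ℝ, the one-step bias-corrected score s⁽¹⁾(y) := s(y) − ∑_{ỹ ∈ 𝒴} s(ỹ) Q(ỹ, y) has exactly zero mean under the prior predictive distribution: ∑_{y ∈ 𝒴} s⁽¹⁾(y) · p(y) = 0. (This is the paper's claim that when the prior equals the true distribution of the fixed effect, the one-step corrected score is exactly unbiased, regardless of the choice of initial score function.) -/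
open MeasureTheory

/-- For every initial score function `s`, the one-step bias-corrected score
`s⁽¹⁾(y) = s y - ∑ yt, s yt * Q yt y` has exactly zero mean under the prior
predictive distribution `p`. -/
theorem stmt_5 {Y : Type*} [Fintype Y] [Nonempty Y]
    {A : Type*} [MeasurableSpace A] (μ : Measure A) [IsProbabilityMeasure μ]
    (f : Y → A → ℝ)
    (hmeas : ∀ y, Measurable (f y))
    (hnonneg : ∀ y α, 0 ≤ f y α)
    (hsum : ∀ α, ∑ y, f y α = 1)
    (p : Y → ℝ) (hp : ∀ y, p y = ∫ α, f y α ∂μ)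
    (hppos : ∀ y, 0 < p y)
    (Q : Matrix Y Y ℝ)
    (hQ : ∀ yt y, Q yt y = (∫ α, f yt α * f y α ∂μ) / p y) :
    ∀ s : Y → ℝ, ∑ y, (s y - ∑ yt, s yt * Q yt y) * p y = 0 := by
  intro s
  have hle1 : ∀ y α, f y α ≤ 1 := by
    intro y α
    calc f y α ≤ ∑ y', f y' α :=
          Finset.single_le_sum (fun y' _ => hnonneg y' α) (Finset.mem_univ y)
      _ = 1 := hsum α
  have hint : ∀ yt y, Integrable (fun α => f yt α * f y α) μ := by
    intro yt y
    refine (integrable_const (1 : ℝ)).mono' ((hmeas yt).mul (hmeas y)).aestronglyMeasurable ?_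
    filter_upwards with α
    rw [Real.norm_eq_abs, abs_of_nonneg (mul_nonneg (hnonneg _ _) (hnonneg _ _))]
    exact mul_le_one₀ (hle1 _ _) (hnonneg _ _) (hle1 _ _)
  have key : ∀ yt, ∑ y, Q yt y * p y = p yt := by
    intro yt
    have : ∀ y, Q yt y * p y = ∫ α, f yt α * f y α ∂μ := by
      intro y
      rw [hQ, div_mul_cancel₀ _ (hppos y).ne']
    simp_rw [this]
    rw [← integral_finset_sum _ (fun y _ => hint yt y)]
    simp_rw [← Finset.mul_sum, hsum, mul_one]
    exact (hp yt).symm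
  have : ∑ y, (s y - ∑ yt, s yt * Q yt y) * p y
      = ∑ y, s y * p y - ∑ y, ∑ yt, s yt * (Q yt y * p y) := by
    rw [← Finset.sum_sub_distrib]
    congr 1; ext y
    rw [sub_mul, Finset.sum_mul]
    simp_rw [mul_assoc]
  rw [this, Finset.sum_comm]
  simp_rw [← Finset.mul_sum, key, sub_self]
end

section
/- If w : 𝒴 → ℝ satisfies ∑_{y ∈ 𝒴} w(y) · Q(y, ỹ) = 0 for every ỹ ∈ 𝒴 (i.e., w is a left null vector of Q), then ∫_𝒜 (∑_{y ∈ 𝒴} w(y) f(y, α))² dμ(α) = 0. -/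
open MeasureTheory

/-- If `w` is a left null vector of `Q`, then the square of the function
`α ↦ ∑ y, w y * f y α` integrates to zero against the prior. -/
theorem stmt_6 {Y : Type*} [Fintype Y] [Nonempty Y]
    {A : Type*} [MeasurableSpace A] (μ : Measure A) [IsProbabilityMeasure μ]
    (f : Y → A → ℝ)
    (hmeas : ∀ y, Measurable (f y))
    (hnonneg : ∀ y α, 0 ≤ f y α)
    (hsum : ∀ α, ∑ y, f y α = 1)
    (p : Y → ℝ) (hp : ∀ y, p y = ∫ α, f y α ∂μ)
    (hppos : ∀ y, 0 < p y)
    (Q : Matrix Y Y ℝ)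
    (hQ : ∀ yt y, Q yt y = (∫ α, f yt α * f y α ∂μ) / p y)
    (w : Y → ℝ)
    (hw : ∀ yt, ∑ y, w y * Q y yt = 0) :
    ∫ α, (∑ y, w y * f y α) ^ 2 ∂μ = 0 := by
  have hbd : ∀ y α, f y α ≤ 1 := by
    intro y α
    calc f y α ≤ ∑ y', f y' α :=
          Finset.single_le_sum (fun y' _ => hnonneg y' α) (Finset.mem_univ y)
      _ = 1 := hsum α
  have hint : ∀ y y', Integrable (fun α => f y α * f y' α) μ := by
    intro y y'
    refine Integrable.mono' (integrable_const (1 : ℝ))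
      ((hmeas y).mul (hmeas y')).aestronglyMeasurable ?_
    filter_upwards with α
    rw [Real.norm_eq_abs, abs_of_nonneg (mul_nonneg (hnonneg y α) (hnonneg y' α))]
    exact mul_le_one₀ (hbd y α) (hnonneg y' α) (hbd y' α)
  -- key: ∑ y, w y * ∫ f y f yt = 0 for all yt
  have key : ∀ yt, ∑ y, w y * ∫ α, f y α * f yt α ∂μ = 0 := by
    intro yt
    have h := hw yt
    have : ∑ y, w y * Q y yt * p yt = 0 := by
      rw [← Finset.sum_mul, h, zero_mul]
    rw [← this]
    refine Finset.sum_congr rfl fun y _ => ?_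
    rw [hQ y yt, mul_assoc, div_mul_cancel₀ _ (hppos yt).ne']
  have expand : ∀ α, (∑ y, w y * f y α) ^ 2
      = ∑ y, ∑ y', (w y * w y') * (f y α * f y' α) := by
    intro α
    rw [sq, Finset.sum_mul_sum]
    refine Finset.sum_congr rfl fun y _ => Finset.sum_congr rfl fun y' _ => ?_
    ring
  calc ∫ α, (∑ y, w y * f y α) ^ 2 ∂μ
      = ∫ α, ∑ y, ∑ y', (w y * w y') * (f y α * f y' α) ∂μ := by
        exact integral_congr_ae (Filter.Eventually.of_forall expand)
    _ = ∑ y, ∑ y', (w y * w y') * ∫ α, f y α * f y' α ∂μ := by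
        rw [integral_finset_sum _ fun y _ =>
          integrable_finset_sum _ fun y' _ => ((hint y y').const_mul _)]
        exact Finset.sum_congr rfl fun y _ => by
          rw [integral_finset_sum _ fun y' _ => ((hint y y').const_mul _)]
          exact Finset.sum_congr rfl fun y' _ => integral_const_mul _ _
    _ = ∑ y', w y' * ∑ y, w y * ∫ α, f y α * f y' α ∂μ := by
        rw [Finset.sum_comm]
        refine Finset.sum_congr rfl fun y' _ => ?_
        rw [Finset.mul_sum]
        exact Finset.sum_congr rfl fun y _ => by ring
    _ = 0 := by
        simp only [key, mul_zero, Finset.sum_const_zero]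
end

section
/- (Lemma 3, the helper lemma) If w : 𝒴 → ℝ satisfies ∑_{y ∈ 𝒴} w(y) · Q(y, ỹ) = 0 for every ỹ ∈ 𝒴 (i.e., w is a left null vector of Q), then ∑_{y ∈ 𝒴} w(y) f(y, α) = 0 for every α ∈ 𝒜. -/
open MeasureTheory

/-- (Lemma 3, helper lemma) If `w` is a left null vector of `Q`, the prior has
full support, and `f y` is continuous for every `y`, then
`∑ y, w y * f y α = 0` for every `α`. -/
theorem stmt_7 {Y : Type*} [Fintype Y] [Nonempty Y]
    {A : Type*} [TopologicalSpace A] [MeasurableSpace A] [BorelSpace A]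
    (μ : Measure A) [IsProbabilityMeasure μ] [μ.IsOpenPosMeasure]
    (f : Y → A → ℝ)
    (hmeas : ∀ y, Measurable (f y))
    (hcont : ∀ y, Continuous (f y))
    (hnonneg : ∀ y α, 0 ≤ f y α)
    (hsum : ∀ α, ∑ y, f y α = 1)
    (p : Y → ℝ) (hp : ∀ y, p y = ∫ α, f y α ∂μ)
    (hppos : ∀ y, 0 < p y)
    (Q : Matrix Y Y ℝ)
    (hQ : ∀ yt y, Q yt y = (∫ α, f yt α * f y α ∂μ) / p y)
    (w : Y → ℝ)
    (hw : ∀ yt, ∑ y, w y * Q y yt = 0) :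
    ∀ α, ∑ y, w y * f y α = 0 := by
  have hle1 : ∀ y α, f y α ≤ 1 := by
    intro y α
    calc f y α ≤ ∑ y', f y' α :=
      Finset.single_le_sum (fun y' _ => hnonneg y' α) (Finset.mem_univ y)
    _ = 1 := hsum α
  set g : A → ℝ := fun α => ∑ y, w y * f y α with hg
  have hgcont : Continuous g :=
    continuous_finset_sum _ fun y _ => continuous_const.mul (hcont y)
  have hint : ∀ y y' : Y, Integrable (fun α => f y α * f y' α) μ := by
    intro y y'
    refine Integrable.mono' (integrable_const 1)
      (((hcont y).mul (hcont y')).aestronglyMeasurable) (ae_of_all _ fun α => ?_)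
    rw [Real.norm_eq_abs, abs_of_nonneg (mul_nonneg (hnonneg y α) (hnonneg y' α))]
    calc f y α * f y' α ≤ 1 * 1 :=
      mul_le_mul (hle1 y α) (hle1 y' α) (hnonneg y' α) zero_le_one
    _ = 1 := by ring
  have hgf : ∀ yt : Y, (fun α => g α * f yt α)
      = fun α => ∑ y, w y * (f y α * f yt α) := by
    intro yt
    ext α
    rw [hg]
    simp only [Finset.sum_mul, mul_assoc]
  have hgfint : ∀ yt : Y, Integrable (fun α => g α * f yt α) μ := by
    intro yt
    rw [hgf yt]
    exact integrable_finset_sum _ fun y _ => (hint y yt).const_mul (w y)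
  -- ∫ g * f yt = 0 for each yt
  have key : ∀ yt, (∫ α, g α * f yt α ∂μ) = 0 := by
    intro yt
    have h1 : (∫ α, g α * f yt α ∂μ) = ∑ y, w y * ∫ α, f y α * f yt α ∂μ := by
      simp only [hgf yt]
      rw [integral_finset_sum _ fun y _ => (hint y yt).const_mul (w y)]
      simp [integral_const_mul]
    rw [h1]
    have h2 : ∀ y, w y * ∫ α, f y α * f yt α ∂μ = (w y * Q y yt) * p yt := by
      intro y
      rw [hQ y yt, mul_assoc, div_mul_cancel₀ _ (hppos yt).ne']
    rw [Finset.sum_congr rfl fun y _ => h2 y, ← Finset.sum_mul, hw yt, zero_mul]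
  -- ∫ g² = 0
  have hsq : (∫ α, g α * g α ∂μ) = 0 := by
    have h1 : (fun α => g α * g α) = fun α => ∑ yt, w yt * (g α * f yt α) := by
      ext α
      conv_lhs => rw [hg]
      simp only [Finset.mul_sum]
      exact Finset.sum_congr rfl fun yt _ => by ring
    rw [h1, integral_finset_sum _ fun yt _ => (hgfint yt).const_mul (w yt)]
    simp only [integral_const_mul]
    exact Finset.sum_eq_zero fun yt _ => by rw [key yt, mul_zero]
  -- g² = 0 a.e., hence everywhere by continuity and full support
  have hsqint : Integrable (fun α => g α * g α) μ := by
    have h1 : (fun α => g α * g α) = fun α => ∑ yt, w yt * (g α * f yt α) := by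
      ext α
      conv_lhs => rw [hg]
      simp only [Finset.mul_sum]
      exact Finset.sum_congr rfl fun yt _ => by ring
    rw [h1]
    exact integrable_finset_sum _ fun yt _ => (hgfint yt).const_mul (w yt)
  have hae : (fun α => g α * g α) =ᵐ[μ] 0 :=
    ((integral_eq_zero_iff_of_nonneg (fun α => mul_self_nonneg (g α)) hsqint).mp hsq)
  have heq : (fun α => g α * g α) = 0 := by
    have := (Continuous.ae_eq_iff_eq μ (hgcont.mul hgcont) continuous_const).mp hae
    exact this
  intro α
  have h0 : g α * g α = 0 := congrFun heq α
  have := mul_self_eq_zero.mp h0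
  simpa [hg] using this
end

section
/- (Lemma 2, part (ii)) The matrix Q is singular (det Q = 0) if and only if there exists a nonzero function m : 𝒴 → ℝ such that ∑_{y ∈ 𝒴} m(y) f(y, α) = 0 for every α ∈ 𝒜; that is, Q has a zero eigenvalue if and only if there exists a nonzero exactly valid moment function free of the fixed effect. -/
open MeasureTheory

/-- (Lemma 2, part (ii)) `Q` is singular if and only if there exists a nonzero
exactly valid moment function free of the fixed effect. -/
theorem stmt_8 {Y : Type*} [Fintype Y] [Nonempty Y] [DecidableEq Y]
    {A : Type*} [TopologicalSpace A] [MeasurableSpace A] [BorelSpace A]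
    (μ : Measure A) [IsProbabilityMeasure μ] [μ.IsOpenPosMeasure]
    (f : Y → A → ℝ)
    (hmeas : ∀ y, Measurable (f y))
    (hcont : ∀ y, Continuous (f y))
    (hnonneg : ∀ y α, 0 ≤ f y α)
    (hsum : ∀ α, ∑ y, f y α = 1)
    (p : Y → ℝ) (hp : ∀ y, p y = ∫ α, f y α ∂μ)
    (hppos : ∀ y, 0 < p y)
    (Q : Matrix Y Y ℝ)
    (hQ : ∀ yt y, Q yt y = (∫ α, f yt α * f y α ∂μ) / p y) :
    Q.det = 0 ↔ ∃ m : Y → ℝ, m ≠ 0 ∧ ∀ α, ∑ y, m y * f y α = 0 := by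
  -- Bounds on f
  have hle1 : ∀ y α, f y α ≤ 1 := by
    intro y α
    calc f y α ≤ ∑ y', f y' α :=
      Finset.single_le_sum (fun y' _ => hnonneg y' α) (Finset.mem_univ y)
    _ = 1 := hsum α
  -- Integrability of products
  have hint : ∀ yt y : Y, Integrable (fun α => f yt α * f y α) μ := by
    intro yt y
    refine ⟨((hmeas yt).mul (hmeas y)).aestronglyMeasurable, ?_⟩
    apply HasFiniteIntegral.of_bounded (C := (1:ℝ))
    filter_upwards with α
    rw [Real.norm_eq_abs, abs_of_nonneg (mul_nonneg (hnonneg yt α) (hnonneg y α))]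
    exact mul_le_one₀ (hle1 yt α) (hnonneg y α) (hle1 y α)
  -- Gram matrix
  set G : Matrix Y Y ℝ := Matrix.of (fun yt y => ∫ α, f yt α * f y α ∂μ) with hG
  have hQG : Q = G * Matrix.diagonal (fun y => (p y)⁻¹) := by
    ext yt y
    rw [Matrix.mul_diagonal, hQ, div_eq_mul_inv]
    rfl
  have hdetQ : Q.det = 0 ↔ G.det = 0 := by
    rw [hQG, Matrix.det_mul, Matrix.det_diagonal, mul_eq_zero]
    constructor
    · rintro (h | h)
      · exact h
      · exact absurd h (Finset.prod_ne_zero_iff.mpr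
          (fun y _ => inv_ne_zero (hppos y).ne'))
    · exact Or.inl
  rw [hdetQ, ← Matrix.exists_vecMul_eq_zero_iff]
  constructor
  · rintro ⟨m, hm, hmG⟩
    refine ⟨m, hm, ?_⟩
    -- ∫ (∑ m y f y)^2 = 0
    have hkey : ∫ α, (∑ y, m y * f y α)^2 ∂μ = 0 := by
      have heq : ∀ α, (∑ y, m y * f y α)^2
          = ∑ yt, ∑ y, (m yt * m y) * (f yt α * f y α) := by
        intro α
        rw [sq, Finset.sum_mul_sum]
        exact Finset.sum_congr rfl fun yt _ => Finset.sum_congr rfl fun y _ => by ring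
      simp_rw [heq]
      rw [integral_finset_sum _ (fun yt _ => integrable_finset_sum _
        (fun y _ => (hint yt y).const_mul _))]
      have : ∀ yt, ∫ α, ∑ y, (m yt * m y) * (f yt α * f y α) ∂μ
          = ∑ y, (m yt * m y) * G yt y := by
        intro yt
        rw [integral_finset_sum _ (fun y _ => (hint yt y).const_mul _)]
        exact Finset.sum_congr rfl fun y _ => MeasureTheory.integral_const_mul _ _
      simp_rw [this]
      rw [Finset.sum_comm]
      have : ∀ y, ∑ yt, (m yt * m y) * G yt y = m y * (Matrix.vecMul m G y) := by
        intro y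
        rw [Matrix.vecMul, dotProduct, Finset.mul_sum]
        exact Finset.sum_congr rfl fun yt _ => by ring
      simp_rw [this, hmG]
      simp
    have hintsq : Integrable (fun α => (∑ y, m y * f y α)^2) μ := by
      have heq : (fun α => (∑ y, m y * f y α)^2)
          = fun α => ∑ yt, ∑ y, (m yt * m y) * (f yt α * f y α) := by
        funext α
        rw [sq, Finset.sum_mul_sum]
        exact Finset.sum_congr rfl fun yt _ => Finset.sum_congr rfl fun y _ => by ring
      rw [heq]
      exact integrable_finset_sum _ (fun yt _ => integrable_finset_sum _
        (fun y _ => (hint yt y).const_mul _))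
    have hae : (fun α => (∑ y, m y * f y α)^2) =ᵐ[μ] 0 :=
      (integral_eq_zero_iff_of_nonneg (fun α => sq_nonneg _) hintsq).mp hkey
    have hcont2 : Continuous (fun α => (∑ y, m y * f y α)^2) :=
      (continuous_finset_sum _ fun y _ => continuous_const.mul (hcont y)).pow 2
    have h0 : (fun α => (∑ y, m y * f y α)^2) = 0 :=
      (Continuous.ae_eq_iff_eq μ hcont2 continuous_const).mp hae
    intro α
    have := congrFun h0 α
    simpa using pow_eq_zero_iff (n := 2) (by norm_num) |>.mp this
  · rintro ⟨m, hm, hmf⟩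
    refine ⟨m, hm, ?_⟩
    funext y
    rw [Matrix.vecMul, dotProduct]
    have : ∀ yt, m yt * G yt y = ∫ α, m yt * (f yt α * f y α) ∂μ := by
      intro yt
      rw [MeasureTheory.integral_const_mul]
      rfl
    simp_rw [this]
    rw [← integral_finset_sum _ (fun yt _ => (hint yt y).const_mul _)]
    have : ∀ α, ∑ yt, m yt * (f yt α * f y α) = (∑ yt, m yt * f yt α) * f y α := by
      intro α
      rw [Finset.sum_mul]
      exact Finset.sum_congr rfl fun yt _ => by ring
    simp_rw [this, hmf]
    simp
end

section
/- (Lemma 2, part (i)) Suppose Q = U · diag(d) · U⁻¹ for an invertible real 𝒴 × 𝒴 matrix U and a function d : 𝒴 → ℝ, and let H := U · diag(k ↦ if d(k) = 0 then 1 else 0) · U⁻¹ be the spectral projection onto the zero-eigenvalue eigenspace. Then for every function s : 𝒴 → ℝ, the limiting bias-corrected score s_∞ defined by s_∞(y) = ∑_{k ∈ 𝒴} s(k) H(k, y) (the row vector s multiplied by H) satisfies ∑_{y ∈ 𝒴} s_∞(y) f(y, α) = 0 for every α ∈ 𝒜. -/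
/-! Write `c = s ᵥ* H`. Since `H * Q = 0`, `c` lies in the left kernel of `Q`, hence of
`Q * diagonal p`, which is the Gram matrix `(∫ f ỹ * f y dμ)`. So `g = ∑ y, c y * f y` has
`∫ g² dμ = 0`; being continuous, `g` vanishes everywhere because `μ` charges nonempty open sets. -/

open MeasureTheory Matrix

lemma Matrix.conj_mul_conj {n R : Type*} [Fintype n] [DecidableEq n] [CommRing R]
    {U : Matrix n n R} (hU : IsUnit U.det) (A B : Matrix n n R) :
    U * A * U⁻¹ * (U * B * U⁻¹) = U * (A * B) * U⁻¹ := by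
  simp only [Matrix.mul_assoc, nonsing_inv_mul_cancel_left _ _ hU]

lemma Matrix.conj_diagonal_mul_conj_diagonal_eq_zero {n R : Type*} [Fintype n] [DecidableEq n]
    [CommRing R] {U : Matrix n n R} (hU : IsUnit U.det) {e d : n → R}
    (hed : ∀ k, e k * d k = 0) :
    U * diagonal e * U⁻¹ * (U * diagonal d * U⁻¹) = 0 := by
  rw [conj_mul_conj hU, diagonal_mul_diagonal, funext hed, diagonal_zero, Matrix.mul_zero,
    Matrix.zero_mul]

noncomputable def integralGram {ι A : Type*} [MeasurableSpace A] (μ : Measure A)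
    (f : ι → A → ℝ) : Matrix ι ι ℝ :=
  Matrix.of fun i j => ∫ a, f i a * f j a ∂μ

section integralGram

variable {ι A : Type*} [MeasurableSpace A] {μ : Measure A} {f : ι → A → ℝ}

lemma integrable_mul_mul_mul (hint : ∀ i j, Integrable (fun a => f i a * f j a) μ)
    (b c : ℝ) (i j : ι) : Integrable (fun a => b * f i a * (c * f j a)) μ := by
  simpa only [mul_mul_mul_comm] using (hint i j).const_mul (b * c)

lemma integrable_sq_sum_mul [Fintype ι] (hint : ∀ i j, Integrable (fun a => f i a * f j a) μ)
    (c : ι → ℝ) : Integrable (fun a => (∑ i, c i * f i a) ^ 2) μ := by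
  simp_rw [sq, Finset.sum_mul_sum]
  exact integrable_finsetSum _ fun i _ => integrable_finsetSum _ fun j _ =>
    integrable_mul_mul_mul hint (c i) (c j) i j

lemma integral_sq_sum_mul [Fintype ι] (hint : ∀ i j, Integrable (fun a => f i a * f j a) μ)
    (c : ι → ℝ) : ∫ a, (∑ i, c i * f i a) ^ 2 ∂μ = c ᵥ* integralGram μ f ⬝ᵥ c := by
  have hterm (i j : ι) :
      ∫ a, c i * f i a * (c j * f j a) ∂μ = c i * c j * integralGram μ f i j := by
    rw [integralGram, of_apply, ← integral_const_mul]
    exact integral_congr_ae (ae_of_all _ fun a => by ring)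
  simp_rw [sq, Finset.sum_mul_sum]
  rw [integral_finsetSum _ fun i _ => integrable_finsetSum _ fun j _ =>
    integrable_mul_mul_mul hint (c i) (c j) i j]
  simp only [integral_finsetSum _ fun j _ => integrable_mul_mul_mul hint _ _ _ j, hterm]
  simp only [dotProduct, vecMul, Finset.sum_mul]
  rw [Finset.sum_comm]
  exact Finset.sum_congr rfl fun j _ => Finset.sum_congr rfl fun i _ => by ring

theorem sum_mul_eq_zero_of_vecMul_integralGram_eq_zero [Fintype ι] [TopologicalSpace A]
    [μ.IsOpenPosMeasure] (hcont : ∀ i, Continuous (f i))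
    (hint : ∀ i j, Integrable (fun a => f i a * f j a) μ) {c : ι → ℝ}
    (hc : c ᵥ* integralGram μ f = 0) (a : A) : ∑ i, c i * f i a = 0 := by
  set g : A → ℝ := fun a => ∑ i, c i * f i a
  have hg : Continuous g := continuous_finsetSum _ fun i _ => continuous_const.mul (hcont i)
  have hg_sq : ∫ a, g a ^ 2 ∂μ = 0 := by
    rw [integral_sq_sum_mul hint, hc, zero_dotProduct]
  have hg_sq_ae : (fun a => g a ^ 2) =ᵐ[μ] 0 :=
    (integral_eq_zero_iff_of_nonneg (fun a => sq_nonneg (g a)) (integrable_sq_sum_mul hint c)).mp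
      hg_sq
  have hg_sq_eq : (fun a => g a ^ 2) = 0 := ((hg.pow 2).ae_eq_iff_eq μ continuous_const).mp hg_sq_ae
  exact pow_eq_zero_iff two_ne_zero |>.mp (congrFun hg_sq_eq a)

end integralGram

theorem stmt_10_general {Y : Type*} [Fintype Y] [DecidableEq Y]
    {A : Type*} [TopologicalSpace A] [MeasurableSpace A] [BorelSpace A]
    (μ : Measure A) [IsProbabilityMeasure μ] [μ.IsOpenPosMeasure]
    (f : Y → A → ℝ)
    (hcont : ∀ y, Continuous (f y))
    (hnonneg : ∀ y α, 0 ≤ f y α)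
    (hsum : ∀ α, ∑ y, f y α = 1)
    (p : Y → ℝ)
    (hppos : ∀ y, 0 < p y)
    (Q : Matrix Y Y ℝ)
    (hQ : ∀ yt y, Q yt y = (∫ α, f yt α * f y α ∂μ) / p y)
    (U : Matrix Y Y ℝ) (hU : IsUnit U.det)
    (d : Y → ℝ)
    (hQU : Q = U * Matrix.diagonal d * U⁻¹)
    (H : Matrix Y Y ℝ)
    (hH : H = U * Matrix.diagonal (fun k => if d k = 0 then (1 : ℝ) else 0) * U⁻¹) :
    ∀ s : Y → ℝ, ∀ α, ∑ y, (∑ k, s k * H k y) * f y α = 0 := by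
  intro s α
  have hHQ : H * Q = 0 := hH ▸ hQU ▸
    conj_diagonal_mul_conj_diagonal_eq_zero hU fun k => by split_ifs <;> simp_all
  have hle_one : ∀ y α, f y α ≤ 1 := fun y α =>
    hsum α ▸ Finset.single_le_sum (fun i _ => hnonneg i α) (Finset.mem_univ y)
  have hint : ∀ y z, Integrable (fun α => f y α * f z α) μ := fun y z =>
    .of_bound ((hcont y).mul (hcont z)).aestronglyMeasurable 1 (ae_of_all _ fun α => by
      rw [Real.norm_eq_abs, abs_of_nonneg (mul_nonneg (hnonneg y α) (hnonneg z α))]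
      exact mul_le_one₀ (hle_one y α) (hnonneg z α) (hle_one z α))
  have hgram : integralGram μ f = Q * diagonal p := by
    ext yt y
    rw [mul_diagonal, hQ, div_mul_cancel₀ _ (hppos y).ne']
    rfl
  have hker : s ᵥ* H ᵥ* integralGram μ f = 0 := by
    rw [hgram, vecMul_vecMul, ← Matrix.mul_assoc, hHQ, Matrix.zero_mul, vecMul_zero]
  exact sum_mul_eq_zero_of_vecMul_integralGram_eq_zero hcont hint hker α

/-- (Lemma 2, part (i)) If `Q = U * diag d * U⁻¹` and `H` is the spectral
projection onto the zero-eigenvalue eigenspace, then for every initial score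
`s` the limiting bias-corrected score `s_∞ = s ᵥ* H` satisfies the exact
moment condition `∑ y, s_∞ y * f y α = 0` for every `α`. -/
theorem stmt_10 {Y : Type*} [Fintype Y] [Nonempty Y] [DecidableEq Y]
    {A : Type*} [TopologicalSpace A] [MeasurableSpace A] [BorelSpace A]
    (μ : Measure A) [IsProbabilityMeasure μ] [μ.IsOpenPosMeasure]
    (f : Y → A → ℝ)
    (hmeas : ∀ y, Measurable (f y))
    (hcont : ∀ y, Continuous (f y))
    (hnonneg : ∀ y α, 0 ≤ f y α)
    (hsum : ∀ α, ∑ y, f y α = 1)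
    (p : Y → ℝ) (hp : ∀ y, p y = ∫ α, f y α ∂μ)
    (hppos : ∀ y, 0 < p y)
    (Q : Matrix Y Y ℝ)
    (hQ : ∀ yt y, Q yt y = (∫ α, f yt α * f y α ∂μ) / p y)
    (U : Matrix Y Y ℝ) (hU : IsUnit U.det)
    (d : Y → ℝ)
    (hQU : Q = U * Matrix.diagonal d * U⁻¹)
    (H : Matrix Y Y ℝ)
    (hH : H = U * Matrix.diagonal (fun k => if d k = 0 then (1 : ℝ) else 0) * U⁻¹) :
    ∀ s : Y → ℝ, ∀ α, ∑ y, (∑ k, s k * H k y) * f y α = 0 :=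
  stmt_10_general μ f hcont hnonneg hsum p hppos Q hQ U hU d hQU H hH
end

section
/- (Lemma 2, part (iii), algebraic core) Let Q be a real n × n matrix with Q = U · diag(d) · U⁻¹ for an invertible matrix U and d : {1,…,n} → ℝ, and let H := U · diag(k ↦ if d(k) = 0 then 1 else 0) · U⁻¹. If a row vector m satisfies m · Q = 0, then m · H = m. (Hence every exactly valid moment function m arises as the limiting bias-corrected score s_∞ obtained from the initial choice s = m.) -/
/-- (Lemma 2, part (iii), algebraic core) If a row vector `m` satisfies
`m ᵥ* Q = 0`, then `m ᵥ* H = m`, where `H` is the spectral projection onto the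
zero-eigenvalue eigenspace of the diagonalizable matrix `Q`. -/
theorem stmt_12 {n : ℕ} (hn : 0 < n)
    (Q U : Matrix (Fin n) (Fin n) ℝ) (hU : IsUnit U.det)
    (d : Fin n → ℝ)
    (hQ : Q = U * Matrix.diagonal d * U⁻¹)
    (H : Matrix (Fin n) (Fin n) ℝ)
    (hH : H = U * Matrix.diagonal (fun k => if d k = 0 then (1 : ℝ) else 0) * U⁻¹)
    (m : Fin n → ℝ)
    (hm : Matrix.vecMul m Q = 0) :
    Matrix.vecMul m H = m := by
  set v := Matrix.vecMul m U with hv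
  have hUU : U * U⁻¹ = 1 := Matrix.mul_nonsing_inv U hU
  -- from hm : v ᵥ* diag d ᵥ* U⁻¹ = 0, multiply by U on the right
  have h1 : Matrix.vecMul v (Matrix.diagonal d) = 0 := by
    have h2 : Matrix.vecMul m (Q * U) = 0 := by
      rw [← Matrix.vecMul_vecMul, hm, Matrix.zero_vecMul]
    have h3 : Q * U = U * Matrix.diagonal d := by
      rw [hQ, Matrix.mul_assoc, Matrix.nonsing_inv_mul U hU, Matrix.mul_one]
    rw [h3, ← Matrix.vecMul_vecMul] at h2
    exact h2
  have hkey : ∀ k, v k * d k = 0 := by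
    intro k
    have := congrFun h1 k
    simpa [Matrix.vecMul_diagonal] using this
  have h4 : Matrix.vecMul v (Matrix.diagonal (fun k => if d k = 0 then (1 : ℝ) else 0)) = v := by
    funext k
    rw [Matrix.vecMul_diagonal]
    by_cases h : d k = 0
    · simp [h]
    · have := hkey k
      have : v k = 0 := by
        rcases mul_eq_zero.mp this with h' | h'
        · exact h'
        · exact absurd h' h
      simp [this]
  calc Matrix.vecMul m H
      = Matrix.vecMul (Matrix.vecMul v (Matrix.diagonal (fun k => if d k = 0 then (1 : ℝ) else 0))) U⁻¹ := by
        rw [hH, hv, ← Matrix.vecMul_vecMul, ← Matrix.vecMul_vecMul]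
    _ = Matrix.vecMul v U⁻¹ := by rw [h4]
    _ = Matrix.vecMul m (U * U⁻¹) := by rw [hv, Matrix.vecMul_vecMul]
    _ = m := by rw [hUU, Matrix.vecMul_one]
end

section
/- Let Q be a real n × n matrix with Q = U · diag(d) · U⁻¹ for an invertible matrix U and d : {1,…,n} → ℝ satisfying 0 ≤ d(k) ≤ 1 for every k. Then the matrix powers (I − Q)^q converge entrywise as q → ∞ to H := U · diag(k ↦ if d(k) = 0 then 1 else 0) · U⁻¹, where I is the n × n identity matrix. (This is the statement that the iterated bias-corrected scores s⁽q⁾ converge to the functional-differencing score s_∞ as q → ∞.) -/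
/-- If `Q = U * diag d * U⁻¹` with all `d k ∈ [0, 1]`, then the matrix powers
`(I - Q)^q` converge entrywise, as `q → ∞`, to the spectral projection `H`
onto the zero-eigenvalue eigenspace of `Q`. -/
theorem stmt_13 {n : ℕ} (hn : 0 < n)
    (Q U : Matrix (Fin n) (Fin n) ℝ) (hU : IsUnit U.det)
    (d : Fin n → ℝ) (hd : ∀ k, 0 ≤ d k ∧ d k ≤ 1)
    (hQ : Q = U * Matrix.diagonal d * U⁻¹)
    (H : Matrix (Fin n) (Fin n) ℝ)
    (hH : H = U * Matrix.diagonal (fun k => if d k = 0 then (1 : ℝ) else 0) * U⁻¹) :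
    Filter.Tendsto (fun q : ℕ => (1 - Q) ^ q) Filter.atTop (nhds H) := by
  have hUU : U * U⁻¹ = 1 := Matrix.mul_nonsing_inv U hU
  have hUU' : U⁻¹ * U = 1 := Matrix.nonsing_inv_mul U hU
  have h1 : 1 - Q = U * Matrix.diagonal (fun k => 1 - d k) * U⁻¹ := by
    have : (Matrix.diagonal fun k => 1 - d k)
        = (1 : Matrix (Fin n) (Fin n) ℝ) - Matrix.diagonal d := by
      rw [← Matrix.diagonal_one, ← Matrix.diagonal_sub]
    rw [this, Matrix.mul_sub, Matrix.mul_one, Matrix.sub_mul, hUU, hQ]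
  have key : ∀ q : ℕ,
      (1 - Q) ^ q = U * Matrix.diagonal (fun k => (1 - d k) ^ q) * U⁻¹ := by
    intro q
    induction q with
    | zero => simp [hUU]
    | succ q ih =>
      rw [pow_succ, ih, h1]
      simp only [Matrix.mul_assoc]
      rw [← Matrix.mul_assoc U⁻¹ U, hUU', Matrix.one_mul,
        ← Matrix.mul_assoc (Matrix.diagonal _), Matrix.diagonal_mul_diagonal]
      simp [pow_succ]
  simp only [key, hH]
  have hcont : Continuous (fun M : Matrix (Fin n) (Fin n) ℝ => U * M * U⁻¹) :=
    (continuous_const.matrix_mul continuous_id).matrix_mul continuous_const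
  refine (hcont.tendsto _).comp ?_
  refine (Continuous.matrix_diagonal continuous_id).continuousAt.tendsto.comp ?_
  rw [tendsto_pi_nhds]
  intro k
  show Filter.Tendsto (fun q => (1 - d k) ^ q) Filter.atTop
    (nhds (if d k = 0 then (1:ℝ) else 0))
  by_cases h : d k = 0
  · rw [if_pos h]
    simpa [h] using tendsto_const_nhds (α := ℕ) (x := (1:ℝ))
  · rw [if_neg h]
    apply tendsto_pow_atTop_nhds_zero_of_lt_one
    · linarith [(hd k).2]
    · have := (hd k).1
      cases' lt_or_eq_of_le this with h' h'
      · linarith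
      · exact absurd h'.symm h
end

section
/- In the static logit panel model, the likelihood ratio of two outcomes with the same sufficient statistic is free of the fixed effect: if ȳ = (ȳ₀, ȳ₁) and ỹ = (ỹ₀, ỹ₁) satisfy 0 ≤ ȳ₀, ỹ₀ ≤ T₀, 0 ≤ ȳ₁, ỹ₁ ≤ T₁, and ȳ₀ + ȳ₁ = ỹ₀ + ỹ₁, then for all α, θ ∈ ℝ, f(ȳ | α, θ) · C(T₀, ỹ₀) · C(T₁, ỹ₁) = f(ỹ | α, θ) · C(T₀, ȳ₀) · C(T₁, ȳ₁) · exp(((ȳ₁ : ℝ) − ỹ₁) · θ). -/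
/-- The standardized logistic cdf. -/
noncomputable def logisticCdf (u : ℝ) : ℝ := 1 / (1 + Real.exp (-u))

/-- The static logit panel model likelihood of the outcome `y = (y₀, y₁)`
given fixed effect `α` and common parameter `θ`. -/
noncomputable def logitLik (T0 T1 : ℕ) (y : ℕ × ℕ) (α θ : ℝ) : ℝ :=
  (T0.choose y.1 : ℝ) * (1 - logisticCdf α) ^ (T0 - y.1) * logisticCdf α ^ y.1 *
  (T1.choose y.2 : ℝ) * (1 - logisticCdf (θ + α)) ^ (T1 - y.2) *
    logisticCdf (θ + α) ^ y.2

/-! The odds `F(u) / (1 - F(u))` of the logistic cdf equal `exp u`, so the likelihood is a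
function of the parameters times `exp ((y₀ + y₁) α + y₁ θ)`: the fixed effect enters only
through the sufficient statistic `y₀ + y₁`, and it cancels from the ratio of two outcomes that
share it. -/

lemma logisticCdf_eq_exp_mul_one_sub (u : ℝ) :
    logisticCdf u = Real.exp u * (1 - logisticCdf u) := by
  unfold logisticCdf
  rw [Real.exp_neg]
  field_simp
  ring

lemma pow_sub_mul_mul_pow {M : Type*} [CommMonoid M] (q r : M) {y T : ℕ} (h : y ≤ T) :
    q ^ (T - y) * (r * q) ^ y = q ^ T * r ^ y := by
  rw [mul_pow, mul_left_comm, ← pow_add, Nat.sub_add_cancel h, mul_comm (r ^ y)]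

lemma one_sub_logisticCdf_pow_mul_logisticCdf_pow (u : ℝ) {y T : ℕ} (h : y ≤ T) :
    (1 - logisticCdf u) ^ (T - y) * logisticCdf u ^ y =
      (1 - logisticCdf u) ^ T * Real.exp (y * u) := by
  nth_rw 2 [logisticCdf_eq_exp_mul_one_sub u]
  rw [pow_sub_mul_mul_pow _ _ h, Real.exp_nat_mul]

lemma logitLik_eq_mul_exp {T0 T1 : ℕ} {y : ℕ × ℕ} (h0 : y.1 ≤ T0) (h1 : y.2 ≤ T1) (α θ : ℝ) :
    logitLik T0 T1 y α θ =
      (T0.choose y.1 : ℝ) * (T1.choose y.2 : ℝ) *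
        ((1 - logisticCdf α) ^ T0 * (1 - logisticCdf (θ + α)) ^ T1) *
        Real.exp (((y.1 + y.2 : ℕ) : ℝ) * α + y.2 * θ) := by
  have hα := one_sub_logisticCdf_pow_mul_logisticCdf_pow α h0
  have hθα := one_sub_logisticCdf_pow_mul_logisticCdf_pow (θ + α) h1
  calc logitLik T0 T1 y α θ
      = (T0.choose y.1 : ℝ) * (T1.choose y.2 : ℝ) *
          ((1 - logisticCdf α) ^ (T0 - y.1) * logisticCdf α ^ y.1) *
          ((1 - logisticCdf (θ + α)) ^ (T1 - y.2) * logisticCdf (θ + α) ^ y.2) := by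
        unfold logitLik; ring
    _ = _ := by
        have hexponent : ((y.1 + y.2 : ℕ) : ℝ) * α + y.2 * θ = y.1 * α + y.2 * (θ + α) := by
          push_cast; ring
        rw [hα, hθα, hexponent, Real.exp_add]
        ring

theorem stmt_15_general (T0 T1 : ℕ)
    (yb yt : ℕ × ℕ)
    (hyb0 : yb.1 ≤ T0) (hyb1 : yb.2 ≤ T1)
    (hyt0 : yt.1 ≤ T0) (hyt1 : yt.2 ≤ T1)
    (hstat : yb.1 + yb.2 = yt.1 + yt.2) :
    ∀ α θ : ℝ,
      logitLik T0 T1 yb α θ * (T0.choose yt.1 : ℝ) * (T1.choose yt.2 : ℝ) =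
        logitLik T0 T1 yt α θ * (T0.choose yb.1 : ℝ) * (T1.choose yb.2 : ℝ) *
          Real.exp (((yb.2 : ℝ) - (yt.2 : ℝ)) * θ) := by
  intro α θ
  rw [logitLik_eq_mul_exp hyb0 hyb1, logitLik_eq_mul_exp hyt0 hyt1, hstat]
  have hexp : Real.exp (((yt.1 + yt.2 : ℕ) : ℝ) * α + yb.2 * θ) =
      Real.exp (((yt.1 + yt.2 : ℕ) : ℝ) * α + yt.2 * θ) *
        Real.exp (((yb.2 : ℝ) - (yt.2 : ℝ)) * θ) := by
    rw [← Real.exp_add]; ring_nf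
  rw [hexp]; ring

/-- In the static logit panel model, the likelihood ratio of two outcomes with
the same sufficient statistic is free of the fixed effect. -/
theorem stmt_15 (T0 T1 : ℕ) (hT0 : 0 < T0) (hT1 : 0 < T1)
    (yb yt : ℕ × ℕ)
    (hyb0 : yb.1 ≤ T0) (hyb1 : yb.2 ≤ T1)
    (hyt0 : yt.1 ≤ T0) (hyt1 : yt.2 ≤ T1)
    (hstat : yb.1 + yb.2 = yt.1 + yt.2) :
    ∀ α θ : ℝ,
      logitLik T0 T1 yb α θ * (T0.choose yt.1 : ℝ) * (T1.choose yt.2 : ℝ) =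
        logitLik T0 T1 yt α θ * (T0.choose yb.1 : ℝ) * (T1.choose yb.2 : ℝ) *
          Real.exp (((yb.2 : ℝ) - (yt.2 : ℝ)) * θ) :=
  stmt_15_general T0 T1 yb yt hyb0 hyb1 hyt0 hyt1 hstat
end
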